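/- For every integer p ≥ 1 and k ∈ {1,2,3}, the total number of lattice points of ℤ² contained in ℓ_p·Q̊_p^[k] equals 1 + δ, where δ is: for k = 1, (p+3)³/8 if p is odd and (p+2)(p+3)²/2 if p is even; for k = 2, (p+3)(p²+5p+8)/8 if p is odd and (p+2)(p²+5p+8)/2 if p is even; for k = 3, (p+3)(p²+4p+7)/8 if p is odd and (p+2)(p²+4p+7)/2 if p is even. -/

import Mathlib

open Pointwise

/-- Q_p^[1] := conv({(1,−1),(p,1),(−1,0)}). -/
def Qpoly1 (p : ℤ) : Set (ℝ × ℝ) :=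
  convexHull ℝ ({(1, -1), ((p : ℝ), 1), (-1, 0)} : Set (ℝ × ℝ))

/-- Q_p^[2] := conv({(1,−1),(p,1),(p−1,1),(−1,0)}). -/
def Qpoly2 (p : ℤ) : Set (ℝ × ℝ) :=
  convexHull ℝ ({(1, -1), ((p : ℝ), 1), ((p : ℝ) - 1, 1), (-1, 0)} : Set (ℝ × ℝ))

/-- Q_p^[3] := conv({(1,−1),(p,1),(p−1,1),(−1,0),(0,−1)}). -/
def Qpoly3 (p : ℤ) : Set (ℝ × ℝ) :=
  convexHull ℝ ({(1, -1), ((p : ℝ), 1), ((p : ℝ) - 1, 1), (-1, 0), (0, -1)} : Set (ℝ × ℝ))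

/-- Q_p^[k] for k ∈ {1,2,3}. -/
def Qpoly (p : ℤ) (k : ℕ) : Set (ℝ × ℝ) :=
  if k = 1 then Qpoly1 p else if k = 2 then Qpoly2 p else Qpoly3 p

/-- The lattice ℤ² viewed inside ℝ². -/
def latticePts : Set (ℝ × ℝ) := {x | ∃ m n : ℤ, x = ((m : ℝ), (n : ℝ))}

/-- The polar polygon Q̊ := {y : ⟨y,x⟩ ≥ −1 for all x ∈ Q}. -/
def polar2 (Q : Set (ℝ × ℝ)) : Set (ℝ × ℝ) :=
  {y | ∀ x ∈ Q, -1 ≤ y.1 * x.1 + y.2 * x.2}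

/-- ℓ_p := (p+1)/2 if p is odd, p+1 if p is even. -/
def ellp (p : ℤ) : ℤ := if Odd p then (p + 1) / 2 else p + 1

/-! Since `polar2 (convexHull V) = polar2 V`, an integer point `(m, n)` lies in `ℓ • Q̊` exactly
when `⟨(m, n), v⟩ ≥ -ℓ` for every vertex `v` of `Q`. In both parities `2ℓ = j (p + 1)`, with
`j = 1` for odd `p` and `j = 2` for even `p`, and the vertex inequalities cut out the columns
`-j ≤ m ≤ ℓ`, column `m` holding `(p + 1) m + 2ℓ + 1 - (k - 1) max(m, 0)` lattice points.
Summing these arithmetic progressions gives the count. -/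

open Finset

lemma polar2_convexHull (V : Set (ℝ × ℝ)) : polar2 (convexHull ℝ V) = polar2 V := by
  refine Set.ext fun y => ⟨fun h x hx => h x (subset_convexHull ℝ V hx), fun h => ?_⟩
  have hlin : IsLinearMap ℝ (fun x : ℝ × ℝ => y.1 * x.1 + y.2 * x.2) :=
    ⟨fun a b => by simp only [Prod.fst_add, Prod.snd_add]; ring,
      fun c a => by simp only [Prod.smul_fst, Prod.smul_snd, smul_eq_mul]; ring⟩
  exact fun x hx => convexHull_min h (convex_halfSpace_ge hlin (-1)) hx

lemma mem_smul_polar2 {c : ℝ} (hc : 0 < c) {Q : Set (ℝ × ℝ)} {y : ℝ × ℝ} :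
    y ∈ c • polar2 Q ↔ ∀ x ∈ Q, -c ≤ y.1 * x.1 + y.2 * x.2 := by
  rw [Set.mem_smul_set_iff_inv_smul_mem₀ hc.ne']
  refine forall₂_congr fun x _ => ?_
  rw [Prod.smul_fst, Prod.smul_snd, smul_eq_mul, smul_eq_mul, mul_assoc, mul_assoc, ← mul_add,
    le_inv_mul_iff₀ hc, mul_neg_one]

def castPoint (q : ℤ × ℤ) : ℝ × ℝ := ((q.1 : ℝ), (q.2 : ℝ))

lemma castPoint_injective : Function.Injective castPoint := fun a b h => by
  simp only [castPoint, Prod.mk.injEq, Int.cast_inj] at h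
  exact Prod.ext h.1 h.2

lemma latticePts_eq_range_castPoint : latticePts = Set.range castPoint := by
  ext x
  simp [latticePts, castPoint, eq_comm]

def dualLatticePoints (W : Set (ℤ × ℤ)) (l : ℤ) : Set (ℤ × ℤ) :=
  {q | ∀ w ∈ W, -l ≤ q.1 * w.1 + q.2 * w.2}

lemma castPoint_preimage_smul_polar2 {l : ℤ} (hl : 0 < l) (W : Set (ℤ × ℤ)) :
    castPoint ⁻¹' ((l : ℝ) • polar2 (convexHull ℝ (castPoint '' W))) =
      dualLatticePoints W l := by
  ext q
  rw [polar2_convexHull, Set.mem_preimage, mem_smul_polar2 (by exact_mod_cast hl)]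
  simp only [Set.forall_mem_image, castPoint, dualLatticePoints]
  exact forall₂_congr fun w _ => by exact_mod_cast Iff.rfl

lemma ncard_smul_polar2_inter_latticePts {l : ℤ} (hl : 0 < l) (W : Set (ℤ × ℤ)) :
    (((l : ℝ) • polar2 (convexHull ℝ (castPoint '' W))) ∩ latticePts).ncard =
      (dualLatticePoints W l).ncard := by
  rw [latticePts_eq_range_castPoint, ← castPoint_preimage_smul_polar2 hl,
    ← Set.ncard_preimage_of_injective_subset_range castPoint_injective Set.inter_subset_right,
    Set.preimage_inter_range]

noncomputable def columns (s : Finset ℤ) (lo hi : ℤ → ℤ) : Finset (ℤ × ℤ) :=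
  s.biUnion fun m => {m} ×ˢ Icc (lo m) (hi m)

lemma mem_columns {s : Finset ℤ} {lo hi : ℤ → ℤ} {q : ℤ × ℤ} :
    q ∈ columns s lo hi ↔ q.1 ∈ s ∧ lo q.1 ≤ q.2 ∧ q.2 ≤ hi q.1 := by
  obtain ⟨m, n⟩ := q
  simp [columns, and_comm]

lemma card_columns {s : Finset ℤ} {lo hi : ℤ → ℤ} (h : ∀ m ∈ s, lo m ≤ hi m + 1) :
    ((columns s lo hi).card : ℚ) = ∑ m ∈ s, ((hi m - lo m + 1 : ℤ) : ℚ) := by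
  rw [columns, card_biUnion]
  · push_cast
    refine sum_congr rfl fun m hm => ?_
    rw [card_product, card_singleton, one_mul, Int.card_Icc, ← Int.cast_natCast,
      Int.toNat_of_nonneg (by linarith [h m hm])]
    push_cast; ring
  · intro a _ b _ hab
    simp only [Function.onFun, disjoint_left, mem_product, mem_singleton]
    exact fun q ha hb => hab (ha.1.symm.trans hb.1)

lemma sum_Icc_intCast {a b : ℤ} (hab : a ≤ b + 1) :
    ∑ m ∈ Icc a b, (m : ℚ) = (a + b) * (b + 1 - a) / 2 := by
  replace hab : a - 1 ≤ b := by omega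
  induction b, hab using Int.leInduction with
  | base => rw [Icc_eq_empty (by omega)]; push_cast; ring
  | succ b hab ih =>
    rw [← insert_Icc_right_eq_Icc_add_one (by omega), sum_insert (by simp), ih]
    push_cast; ring

def Qvertices (p : ℤ) (k : ℕ) : Set (ℤ × ℤ) :=
  if k = 1 then {(1, -1), (p, 1), (-1, 0)}
  else if k = 2 then {(1, -1), (p, 1), (p - 1, 1), (-1, 0)}
  else {(1, -1), (p, 1), (p - 1, 1), (-1, 0), (0, -1)}

lemma Qpoly_eq_convexHull_Qvertices (p : ℤ) (k : ℕ) :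
    Qpoly p k = convexHull ℝ (castPoint '' Qvertices p k) := by
  unfold Qpoly Qpoly1 Qpoly2 Qpoly3 Qvertices
  split_ifs <;> simp [Set.image_insert_eq, castPoint]

section Regions

variable {p l j : ℤ}

lemma neg_le_of_neg_two_mul_le (hp : 0 ≤ p) (hl : 2 * l = j * (p + 1)) {m : ℤ}
    (h : -(2 * l) ≤ (p + 1) * m) : -j ≤ m :=
  le_of_mul_le_mul_left (by linarith) (by linarith : 0 < p + 1)

lemma dualLatticePoints_Qvertices_one (hp : 0 ≤ p) (hl : 2 * l = j * (p + 1)) :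
    dualLatticePoints (Qvertices p 1) l =
      columns (Icc (-j) l) (fun m => -l - p * m) (fun m => m + l) := by
  ext ⟨m, n⟩
  simp only [dualLatticePoints, Qvertices, ↓reduceIte, Set.forall_mem_insert,
    Set.mem_singleton_iff, forall_eq, Set.mem_ofPred_eq, SetLike.mem_coe, mem_columns, mem_Icc]
  constructor
  · rintro ⟨h1, h2, h3⟩
    exact ⟨⟨neg_le_of_neg_two_mul_le hp hl (by linarith), by linarith⟩, by linarith,
      by linarith⟩
  · rintro ⟨⟨-, h3⟩, h2, h1⟩
    exact ⟨by linarith, by linarith, by linarith⟩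

lemma dualLatticePoints_Qvertices_two (hp : 0 ≤ p) (hl : 2 * l = j * (p + 1)) :
    dualLatticePoints (Qvertices p 2) l =
      columns (Icc (-j) l) (fun m => max (-l - p * m) (-l - (p - 1) * m)) (fun m => m + l) := by
  ext ⟨m, n⟩
  simp only [dualLatticePoints, Qvertices, Nat.reduceEqDiff, ↓reduceIte, Set.forall_mem_insert,
    Set.mem_singleton_iff, forall_eq, Set.mem_ofPred_eq, SetLike.mem_coe, mem_columns, mem_Icc,
    max_le_iff]
  constructor
  · rintro ⟨h1, h2, h3, h4⟩
    exact ⟨⟨neg_le_of_neg_two_mul_le hp hl (by linarith), by linarith⟩,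
      ⟨by linarith, by linarith⟩, by linarith⟩
  · rintro ⟨⟨-, h4⟩, ⟨h2, h3⟩, h1⟩
    exact ⟨by linarith, by linarith, by linarith, by linarith⟩

lemma dualLatticePoints_Qvertices_three (hp : 0 ≤ p) (hl : 2 * l = j * (p + 1)) :
    dualLatticePoints (Qvertices p 3) l =
      columns (Icc (-j) l) (fun m => max (-l - p * m) (-l - (p - 1) * m))
        (fun m => min (m + l) l) := by
  ext ⟨m, n⟩
  simp only [dualLatticePoints, Qvertices, Nat.reduceEqDiff, ↓reduceIte, Set.forall_mem_insert,
    Set.mem_singleton_iff, forall_eq, Set.mem_ofPred_eq, SetLike.mem_coe, mem_columns, mem_Icc,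
    max_le_iff, le_min_iff]
  constructor
  · rintro ⟨h1, h2, h3, h4, h5⟩
    exact ⟨⟨neg_le_of_neg_two_mul_le hp hl (by linarith), by linarith⟩,
      ⟨by linarith, by linarith⟩, by linarith, by linarith⟩
  · rintro ⟨⟨-, h4⟩, ⟨h2, h3⟩, h1, h5⟩
    exact ⟨by linarith, by linarith, by linarith, by linarith, by linarith⟩

end Regions

lemma sum_Icc_affine_sub_max {j l : ℤ} (hj : 0 ≤ j) (hl : 0 ≤ l) (a b c : ℚ) :
    ∑ m ∈ Icc (-j) l, (a * m + b - c * max (m : ℚ) 0) =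
      a * ((l - j) * (l + j + 1) / 2) + b * (l + j + 1) - c * (l * (l + 1) / 2) := by
  have hpos : ∑ m ∈ Icc (-j) l, max (m : ℚ) 0 = ∑ m ∈ Icc 0 l, (m : ℚ) := by
    rw [← sum_subset (Icc_subset_Icc (neg_nonpos.2 hj) le_rfl) fun m hm hm' => ?_]
    · exact sum_congr rfl fun m hm => max_eq_left (by exact_mod_cast (mem_Icc.1 hm).1)
    · have : m ≤ 0 := by simp only [mem_Icc] at hm hm'; omega
      exact max_eq_right (by exact_mod_cast this)
  rw [sum_sub_distrib, sum_add_distrib, ← mul_sum, ← mul_sum, hpos, sum_const, Int.card_Icc,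
    sum_Icc_intCast (by omega), sum_Icc_intCast (by omega), nsmul_eq_mul, ← Int.cast_natCast,
    Int.toNat_of_nonneg (by omega)]
  push_cast; ring

lemma ncard_smul_polar2_Qpoly_inter_latticePts {p l j : ℤ} {k : ℕ} (hp : 0 ≤ p) (hj : 1 ≤ j)
    (hl : 2 * l = j * (p + 1)) (hk : k ∈ ({1, 2, 3} : Set ℕ)) :
    ((((l : ℝ) • polar2 (Qpoly p k)) ∩ latticePts).ncard : ℚ) =
      (p + 1) * ((l - j) * (l + j + 1) / 2) + (2 * l + 1) * (l + j + 1) -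
        (k - 1) * (l * (l + 1) / 2) := by
  have hl0 : 0 < l := by nlinarith
  rw [Qpoly_eq_convexHull_Qvertices, ncard_smul_polar2_inter_latticePts hl0]
  have hpos : ∀ m ∈ Icc (-j) l,
      0 ≤ (p + 1) * (m + j) ∧ 0 ≤ p * (m + j) ∧ 0 ≤ p * max m 0 :=
    fun m hm =>
      have hmj : 0 ≤ m + j := by linarith [(mem_Icc.1 hm).1]
      ⟨mul_nonneg (by omega) hmj, mul_nonneg hp hmj, mul_nonneg hp (le_max_right m 0)⟩
  -- the vertices `(p - 1, 1)` and `(0, -1)` each take `max m 0` points off column `m`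
  obtain ⟨lo, hi, hregion, hwidth⟩ : ∃ lo hi : ℤ → ℤ,
      dualLatticePoints (Qvertices p k) l = columns (Icc (-j) l) lo hi ∧
      ∀ m ∈ Icc (-j) l, lo m ≤ hi m + 1 ∧
        hi m - lo m + 1 = (p + 1) * m + (2 * l + 1) - ((k : ℤ) - 1) * max m 0 := by
    rcases hk with rfl | rfl | rfl
    · exact ⟨_, _, dualLatticePoints_Qvertices_one hp hl, fun m hm => by
        have := hpos m hm; constructor <;> grind⟩
    · exact ⟨_, _, dualLatticePoints_Qvertices_two hp hl, fun m hm => by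
        have := hpos m hm; constructor <;> grind⟩
    · exact ⟨_, _, dualLatticePoints_Qvertices_three hp hl, fun m hm => by
        have := hpos m hm; constructor <;> grind⟩
  rw [hregion, Set.ncard_coe_finset, card_columns fun m hm => (hwidth m hm).1,
    sum_congr rfl fun m hm => congrArg (Int.cast (R := ℚ)) (hwidth m hm).2]
  push_cast
  exact sum_Icc_affine_sub_max (by omega) hl0.le _ _ _

lemma two_mul_ellp_of_odd {p : ℤ} (h : Odd p) : 2 * ellp p = p + 1 := by
  obtain ⟨t, rfl⟩ := h
  rw [ellp, if_pos ⟨t, rfl⟩]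
  omega

lemma ellp_of_even {p : ℤ} (h : Even p) : ellp p = p + 1 :=
  if_neg (Int.not_odd_iff_even.2 h)

/-- the total number of lattice points in ℓ_p·Q̊_p^[k] equals 1 + δ_{Q_p^[k]}. -/
theorem stmt13 (p : ℤ) (hp : 1 ≤ p) (k : ℕ) (hk : k ∈ ({1, 2, 3} : Set ℕ)) :
    (Odd p →
      ((((ellp p : ℝ) • polar2 (Qpoly p k)) ∩ latticePts).ncard : ℚ) =
        1 + ((p : ℚ) + 3) *
          (if k = 1 then ((p : ℚ) + 3) ^ 2
           else if k = 2 then (p : ℚ) ^ 2 + 5 * p + 8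
           else (p : ℚ) ^ 2 + 4 * p + 7) / 8) ∧
    (Even p →
      ((((ellp p : ℝ) • polar2 (Qpoly p k)) ∩ latticePts).ncard : ℚ) =
        1 + ((p : ℚ) + 2) *
          (if k = 1 then ((p : ℚ) + 3) ^ 2
           else if k = 2 then (p : ℚ) ^ 2 + 5 * p + 8
           else (p : ℚ) ^ 2 + 4 * p + 7) / 2) := by
  refine ⟨fun hodd => ?_, fun heven => ?_⟩
  · have hl := two_mul_ellp_of_odd hodd
    have hlq : (ellp p : ℚ) = (p + 1) / 2 := by
      rw [eq_div_iff two_ne_zero, mul_comm]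
      exact_mod_cast hl
    rw [ncard_smul_polar2_Qpoly_inter_latticePts (j := 1) (by omega) le_rfl (by rw [hl, one_mul]) hk,
      hlq]
    rcases hk with rfl | rfl | rfl <;> norm_num <;> ring
  · have hl := ellp_of_even heven
    rw [ncard_smul_polar2_Qpoly_inter_latticePts (j := 2) (by omega) one_le_two (by rw [hl]) hk,
      hl]
    rcases hk with rfl | rfl | rfl <;> norm_num <;> ring
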